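/- arXiv:2201.11162 — 2 statements merged into one kernel-verified Lean document; each statement's English description precedes it below -/
import Mathlib

section
/- Let Θ be a measurable space (parameter space), Z a measurable space (data space), D a probability measure on Z, and ℓ : Θ × Z → ℝ a measurable loss function with 0 ≤ ℓ(θ,z) ≤ 1 for all θ, z. For θ ∈ Θ define the risk L(θ) = ∫_Z ℓ(θ,z) dD(z), and for a sample (z₁,…,z_m) ∈ Z^m define the empirical risk L_m(θ) = (1/m) Σ_{k=1}^m ℓ(θ,z_k). Fix a probability measure π on Θ (the prior), a real ε > 0, a real λ ∈ (0,2), and an integer m ≥ 1. Then with probability at least 1−ε over i.i.d. samples (z₁,…,z_m) drawn from the m-fold product measure D^{⊗m}, it holds simultaneously for all probability measures μ on Θ (posteriors) that ∫_Θ L(θ) dμ(θ) ≤ (∫_Θ L_m(θ) dμ(θ))/(1−λ/2) + (KL(μ‖π) + log(2√m/ε)) / (m λ (1−λ/2)). -/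
/-!
For fixed `θ`, the bound `exp (-x) ≤ 1 - x + x ^ 2 / 2` for `x ≥ 0` together with `ℓ ^ 2 ≤ ℓ`
shows that `f_z(θ) = m λ ((1 - λ/2) L(θ) - L_m(θ))`, a sum of `m` independent terms, has
exponential moment `E_z exp f_z(θ) ≤ 1` under `D^⊗m`. By Tonelli `E_z ∫ exp f_z dπ ≤ 1`, so by
Markov `∫ exp f_z dπ < 1/ε` with probability at least `1 - ε`. On that event the
Donsker–Varadhan inequality `∫ f dμ ≤ KL(μ‖π) + log ∫ exp f dπ`, which is Gibbs' inequality for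
`μ` against the tilted measure `π.tilted f`, gives
`m λ ((1 - λ/2) ∫ L dμ - ∫ L_m dμ) ≤ KL(μ‖π) + log (1/ε)`; rearrange and use `1 ≤ 2 √m`.
-/

open MeasureTheory

lemma Real.exp_neg_le_one_sub_add_sq_div_two {x : ℝ} (hx : 0 ≤ x) :
    Real.exp (-x) ≤ 1 - x + x ^ 2 / 2 := by
  let g : ℝ → ℝ := fun y => 1 - y + y ^ 2 / 2 - Real.exp (-y)
  have hg : ∀ y, HasDerivAt g (y - 1 + Real.exp (-y)) y := fun y => by
    refine ((((hasDerivAt_id y).const_sub 1).add ((hasDerivAt_pow 2 y).div_const 2)).sub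
      (hasDerivAt_neg y).exp).congr_deriv ?_
    ring
  have hmono : Monotone g :=
    monotone_of_hasDerivAt_nonneg hg fun y => by
      show 0 ≤ y - 1 + Real.exp (-y)
      linarith [Real.add_one_le_exp (-y)]
  have := hmono hx
  simp only [g, neg_zero, Real.exp_zero] at this
  linarith

section ExponentialMoment

variable {Ω : Type*} [MeasurableSpace Ω]

theorem integrable_exp_mul_integral_sub (P : Measure Ω) [IsFiniteMeasure P]
    {g : Ω → ℝ} (hg : Measurable g) (hg01 : ∀ ω, g ω ∈ Set.Icc 0 1) {t : ℝ} (ht : 0 ≤ t) :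
    Integrable (fun ω => Real.exp (t * (∫ x, g x ∂P - g ω) - t ^ 2 * (∫ x, g x ∂P) / 2)) P := by
  have hc : 0 ≤ ∫ x, g x ∂P := integral_nonneg fun ω => (hg01 ω).1
  refine .of_mem_Icc 0 (Real.exp (t * ∫ x, g x ∂P)) (by fun_prop) (ae_of_all _ fun ω => ?_)
  refine ⟨(Real.exp_pos _).le, Real.exp_le_exp.2 ?_⟩
  nlinarith [mul_nonneg ht (hg01 ω).1, mul_nonneg (sq_nonneg t) hc]

theorem integral_exp_mul_integral_sub_le_one (P : Measure Ω) [IsProbabilityMeasure P]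
    {g : Ω → ℝ} (hg : Measurable g) (hg01 : ∀ ω, g ω ∈ Set.Icc 0 1) {t : ℝ} (ht : 0 ≤ t) :
    ∫ ω, Real.exp (t * (∫ x, g x ∂P - g ω) - t ^ 2 * (∫ x, g x ∂P) / 2) ∂P ≤ 1 := by
  set c := ∫ x, g x ∂P
  set s := t ^ 2 / 2 - t with hs
  have hg_int : Integrable g P := .of_mem_Icc 0 1 hg.aemeasurable (ae_of_all _ hg01)
  -- `exp (-x) ≤ 1 - x + x²/2` and `g² ≤ g` bound the integrand by an affine function of `g`.
  have hpt : ∀ ω, Real.exp (t * (c - g ω) - t ^ 2 * c / 2)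
      ≤ Real.exp (-(s * c)) * (1 + s * g ω) := by
    intro ω
    obtain ⟨h0, h1⟩ := hg01 ω
    rw [show t * (c - g ω) - t ^ 2 * c / 2 = -(s * c) + -(t * g ω) by ring, Real.exp_add]
    gcongr
    have := Real.exp_neg_le_one_sub_add_sq_div_two (mul_nonneg ht h0)
    rw [hs]
    nlinarith [mul_nonneg (sq_nonneg t) (mul_nonneg h0 (sub_nonneg.2 h1))]
  calc ∫ ω, Real.exp (t * (c - g ω) - t ^ 2 * c / 2) ∂P
      ≤ ∫ ω, Real.exp (-(s * c)) * (1 + s * g ω) ∂P :=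
        integral_mono_of_nonneg (ae_of_all _ fun _ => (Real.exp_pos _).le)
          (((integrable_const 1).add (hg_int.const_mul s)).const_mul _) (ae_of_all _ hpt)
    _ = Real.exp (-(s * c)) * (1 + s * c) := by
        rw [integral_const_mul, integral_add (integrable_const 1) (hg_int.const_mul s),
          integral_const_mul]
        simp [c]
    _ ≤ Real.exp (-(s * c)) * Real.exp (s * c) := by
        gcongr
        linarith [Real.add_one_le_exp (s * c)]
    _ = 1 := by rw [← Real.exp_add, neg_add_cancel, Real.exp_zero]

variable {ι : Type*} [Fintype ι] (P : Measure Ω) [SigmaFinite P] {f : Ω → ℝ}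

theorem integrable_exp_sum_pi (hf : Integrable (fun ω => Real.exp (f ω)) P) :
    Integrable (fun z : ι → Ω => Real.exp (∑ i, f (z i))) (Measure.pi fun _ => P) := by
  simp_rw [Real.exp_sum]
  exact Integrable.fintype_prod fun _ => hf

theorem integral_exp_sum_pi_le_one (hf : ∫ ω, Real.exp (f ω) ∂P ≤ 1) :
    ∫ z : ι → Ω, Real.exp (∑ i, f (z i)) ∂(Measure.pi fun _ => P) ≤ 1 := by
  simp_rw [Real.exp_sum]
  rw [integral_fintype_prod_eq_pow (fun ω => Real.exp (f ω))]
  exact pow_le_one₀ (integral_nonneg fun _ => (Real.exp_pos _).le) hf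

end ExponentialMoment

theorem integral_le_integral_llr_add_log_integral_exp {α : Type*} [MeasurableSpace α]
    {μ ν : Measure α} [IsProbabilityMeasure μ] [IsFiniteMeasure ν] [NeZero ν] (hμν : μ ≪ ν)
    (hllr : Integrable (llr μ ν) μ) {f : α → ℝ} (hfμ : Integrable f μ)
    (hfν : Integrable (fun x => Real.exp (f x)) ν) :
    ∫ x, f x ∂μ ≤ ∫ x, llr μ ν x ∂μ + Real.log (∫ x, Real.exp (f x) ∂ν) := by
  have := isProbabilityMeasure_tilted hfν
  have hgibbs := InformationTheory.integral_llr_add_sub_measure_univ_nonneg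
    (hμν.trans (absolutelyContinuous_tilted hfν)) (integrable_llr_tilted_right hμν hfμ hllr hfν)
  rw [integral_llr_tilted_right hμν hfμ hfν hllr] at hgibbs
  simp only [probReal_univ] at hgibbs
  linarith

theorem one_sub_le_measure_lt_of_lintegral_le_one {Ω : Type*} [MeasurableSpace Ω]
    {P : Measure Ω} [IsProbabilityMeasure P] {G : Ω → ENNReal} (hG : Measurable G)
    (hG1 : ∫⁻ ω, G ω ∂P ≤ 1) {ε : ℝ} (hε : 0 < ε) :
    1 - ENNReal.ofReal ε ≤ P {ω | G ω < ENNReal.ofReal ε⁻¹} := by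
  have hc : ENNReal.ofReal ε⁻¹ ≠ 0 := by simpa using hε
  have hmarkov : P {ω | ENNReal.ofReal ε⁻¹ ≤ G ω} ≤ ENNReal.ofReal ε := calc
    _ ≤ (∫⁻ ω, G ω ∂P) / ENNReal.ofReal ε⁻¹ :=
        meas_ge_le_lintegral_div hG.aemeasurable hc ENNReal.ofReal_ne_top
    _ ≤ 1 / ENNReal.ofReal ε⁻¹ := by gcongr
    _ = ENNReal.ofReal ε := by rw [one_div, ENNReal.ofReal_inv_of_pos hε, inv_inv]
  have hcompl : {ω | G ω < ENNReal.ofReal ε⁻¹} = {ω | ENNReal.ofReal ε⁻¹ ≤ G ω}ᶜ := by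
    ext; simp
  rw [hcompl, prob_compl_eq_one_sub (measurableSet_le measurable_const hG)]
  exact tsub_le_tsub_left hmarkov 1

theorem pac_bayes_of_integral_exp_le_one {Θ Ω : Type*} [MeasurableSpace Θ] [MeasurableSpace Ω]
    (P : Measure Ω) [IsProbabilityMeasure P] (π : Measure Θ) [IsProbabilityMeasure π]
    {F : Θ → Ω → ℝ} (hF : Measurable (Function.uncurry F))
    (hF_int : ∀ θ, Integrable (fun ω => Real.exp (F θ ω)) P)
    (hF_le : ∀ θ, ∫ ω, Real.exp (F θ ω) ∂P ≤ 1) {ε : ℝ} (hε : 0 < ε) :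
    1 - ENNReal.ofReal ε ≤ P {ω | ∀ μ : Measure Θ, IsProbabilityMeasure μ → μ ≪ π →
      Integrable (llr μ π) μ → Integrable (fun θ => F θ ω) μ →
        ∫ θ, F θ ω ∂μ ≤ ∫ θ, llr μ π θ ∂μ + Real.log ε⁻¹} := by
  have hexpF : Measurable fun p : Θ × Ω => ENNReal.ofReal (Real.exp (F p.1 p.2)) :=
    ENNReal.measurable_ofReal.comp (Real.measurable_exp.comp hF)
  let G : Ω → ENNReal := fun ω => ∫⁻ θ, ENNReal.ofReal (Real.exp (F θ ω)) ∂π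
  have hG1 : ∫⁻ ω, G ω ∂P ≤ 1 := calc
    ∫⁻ ω, G ω ∂P = ∫⁻ θ, ∫⁻ ω, ENNReal.ofReal (Real.exp (F θ ω)) ∂P ∂π :=
        (lintegral_lintegral_swap hexpF.aemeasurable).symm
    _ ≤ ∫⁻ _, 1 ∂π := lintegral_mono fun θ => by
        rw [← ofReal_integral_eq_lintegral_ofReal (hF_int θ)
          (ae_of_all _ fun _ => (Real.exp_pos _).le)]
        exact ENNReal.ofReal_le_one.mpr (hF_le θ)
    _ = 1 := by simp
  refine (one_sub_le_measure_lt_of_lintegral_le_one hexpF.lintegral_prod_left' hG1 hε).trans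
    (measure_mono fun ω hω μ _ hμπ hllr hFμ => ?_)
  have hexp_nonneg : 0 ≤ᵐ[π] fun θ => Real.exp (F θ ω) :=
    ae_of_all _ fun _ => (Real.exp_pos _).le
  have hexp_meas : AEStronglyMeasurable (fun θ => Real.exp (F θ ω)) π :=
    (Real.measurable_exp.comp hF.of_uncurry_right).aestronglyMeasurable
  have hexp_int : Integrable (fun θ => Real.exp (F θ ω)) π :=
    (lintegral_ofReal_ne_top_iff_integrable hexp_meas hexp_nonneg).mp (ne_top_of_lt hω)
  have hZ : ∫ θ, Real.exp (F θ ω) ∂π < ε⁻¹ := by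
    rw [← ENNReal.ofReal_lt_ofReal_iff (inv_pos.2 hε),
      ofReal_integral_eq_lintegral_ofReal hexp_int hexp_nonneg]
    exact hω
  calc ∫ θ, F θ ω ∂μ ≤ ∫ θ, llr μ π θ ∂μ + Real.log (∫ θ, Real.exp (F θ ω) ∂π) :=
        integral_le_integral_llr_add_log_integral_exp hμπ hllr hFμ hexp_int
    _ ≤ ∫ θ, llr μ π θ ∂μ + Real.log ε⁻¹ := by
        gcongr
        exact integral_exp_pos hexp_int

theorem le_div_add_div_of_mul_sub_le {m lam a b C : ℝ} (hm : 0 < m) (hlam0 : 0 < lam)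
    (hlam2 : lam < 2) (h : m * lam * ((1 - lam / 2) * a - b) ≤ C) :
    a ≤ b / (1 - lam / 2) + C / (m * lam * (1 - lam / 2)) := by
  have hpos : 0 < 1 - lam / 2 := by linarith
  rw [div_add_div _ _ hpos.ne' (by positivity), le_div_iff₀ (by positivity)]
  nlinarith [mul_le_mul_of_nonneg_left h hpos.le]

section Risk

variable {Θ Z : Type*} {ℓ : Θ → Z → ℝ}

noncomputable def empiricalRisk {m : ℕ} (ℓ : Θ → Z → ℝ) (z : Fin m → Z) (θ : Θ) : ℝ :=
  (m : ℝ)⁻¹ * ∑ k, ℓ θ (z k)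

theorem empiricalRisk_mem_Icc {m : ℕ} (hℓ01 : ∀ θ z, ℓ θ z ∈ Set.Icc 0 1) (z : Fin m → Z)
    (θ : Θ) : empiricalRisk ℓ z θ ∈ Set.Icc 0 1 := by
  have hsum : ∑ k, ℓ θ (z k) ≤ m := by
    simpa using Finset.sum_le_sum fun k (_ : k ∈ Finset.univ) => (hℓ01 θ (z k)).2
  exact ⟨mul_nonneg (by positivity) (Finset.sum_nonneg fun k _ => (hℓ01 θ (z k)).1),
    inv_mul_le_one_of_le₀ hsum (by positivity)⟩

theorem mul_sub_empiricalRisk_eq_sum {m : ℕ} (lam r : ℝ) (z : Fin m → Z) (θ : Θ) :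
    m * lam * ((1 - lam / 2) * r - empiricalRisk ℓ z θ)
      = ∑ k, (lam * (r - ℓ θ (z k)) - lam ^ 2 * r / 2) := by
  obtain rfl | hm := eq_or_ne m 0
  · simp
  simp only [empiricalRisk, Finset.sum_sub_distrib, Finset.sum_const, Finset.card_univ,
    Fintype.card_fin, nsmul_eq_mul, ← Finset.mul_sum]
  field_simp
  ring

variable [MeasurableSpace Θ] [MeasurableSpace Z]

noncomputable def risk (D : Measure Z) (ℓ : Θ → Z → ℝ) (θ : Θ) : ℝ := ∫ x, ℓ θ x ∂D

theorem measurable_risk (D : Measure Z) [SFinite D] (hℓ : Measurable (Function.uncurry ℓ)) :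
    Measurable (risk D ℓ) :=
  (hℓ.stronglyMeasurable.integral_prod_right' (ν := D)).measurable

theorem risk_mem_Icc (D : Measure Z) [IsProbabilityMeasure D]
    (hℓ : Measurable (Function.uncurry ℓ)) (hℓ01 : ∀ θ z, ℓ θ z ∈ Set.Icc 0 1) (θ : Θ) :
    risk D ℓ θ ∈ Set.Icc 0 1 := by
  have hint : Integrable (ℓ θ) D :=
    .of_mem_Icc 0 1 hℓ.of_uncurry_left.aemeasurable (ae_of_all _ (hℓ01 θ))
  refine ⟨integral_nonneg fun z => (hℓ01 θ z).1, ?_⟩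
  simpa [risk] using integral_mono hint (integrable_const 1) fun z => (hℓ01 θ z).2

theorem measurable_uncurry_empiricalRisk {m : ℕ} (hℓ : Measurable (Function.uncurry ℓ)) :
    Measurable (Function.uncurry fun θ (z : Fin m → Z) => empiricalRisk ℓ z θ) :=
  (Finset.measurable_sum _ fun k _ =>
    hℓ.comp (measurable_fst.prodMk ((measurable_pi_apply k).comp measurable_snd))).const_mul _

variable (D : Measure Z) [IsProbabilityMeasure D]

theorem integrable_exp_mul_sub_empiricalRisk (hℓ : Measurable (Function.uncurry ℓ))
    (hℓ01 : ∀ θ z, ℓ θ z ∈ Set.Icc 0 1) {lam : ℝ} (hlam : 0 ≤ lam) (m : ℕ) (θ : Θ) :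
    Integrable (fun z => Real.exp (m * lam * ((1 - lam / 2) * risk D ℓ θ - empiricalRisk ℓ z θ)))
      (Measure.pi fun _ : Fin m => D) := by
  simp_rw [mul_sub_empiricalRisk_eq_sum]
  exact integrable_exp_sum_pi D
    (integrable_exp_mul_integral_sub D hℓ.of_uncurry_left (hℓ01 θ) hlam)

theorem integral_exp_mul_sub_empiricalRisk_le_one (hℓ : Measurable (Function.uncurry ℓ))
    (hℓ01 : ∀ θ z, ℓ θ z ∈ Set.Icc 0 1) {lam : ℝ} (hlam : 0 ≤ lam) (m : ℕ) (θ : Θ) :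
    ∫ z, Real.exp (m * lam * ((1 - lam / 2) * risk D ℓ θ - empiricalRisk ℓ z θ))
      ∂(Measure.pi fun _ : Fin m => D) ≤ 1 := by
  simp_rw [mul_sub_empiricalRisk_eq_sum]
  exact integral_exp_sum_pi_le_one D
    (integral_exp_mul_integral_sub_le_one D hℓ.of_uncurry_left (hℓ01 θ) hlam)

end Risk

/-- **PAC-Bayes-λ inequality** (Thiemann et al. 2017).
For a bounded measurable loss `ℓ` with values in `[0,1]`, a data distribution `D`,
a prior `π`, `ε > 0`, `lam ∈ (0,2)` and sample size `m ≥ 1`, with probability at least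
`1 - ε` over i.i.d. samples from `D^⊗m` it holds simultaneously for all posterior
probability measures `μ` (the Kullback–Leibler divergence being `+∞`, hence the bound
vacuous, unless `μ ≪ π` and the log-likelihood ratio is `μ`-integrable) that the
expected risk is bounded by the stated combination of expected empirical risk and
KL-complexity. -/
theorem pac_bayes_lambda
    {Θ Z : Type*} [MeasurableSpace Θ] [MeasurableSpace Z]
    (D : Measure Z) [IsProbabilityMeasure D]
    (ℓ : Θ → Z → ℝ) (hℓmeas : Measurable (Function.uncurry ℓ))
    (hℓbdd : ∀ θ z, 0 ≤ ℓ θ z ∧ ℓ θ z ≤ 1)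
    (π : Measure Θ) [IsProbabilityMeasure π]
    (ε : ℝ) (hε : 0 < ε)
    (lam : ℝ) (hlam : lam ∈ Set.Ioo (0 : ℝ) 2)
    (m : ℕ) (hm : 1 ≤ m) :
    (1 : ENNReal) - ENNReal.ofReal ε ≤
      (Measure.pi fun _ : Fin m => D)
        {z : Fin m → Z |
          ∀ μ : Measure Θ, IsProbabilityMeasure μ → μ ≪ π →
            Integrable (fun θ => Real.log (μ.rnDeriv π θ).toReal) μ →
            (∫ θ, (∫ x, ℓ θ x ∂D) ∂μ) ≤
              (∫ θ, ((m : ℝ)⁻¹ * ∑ k : Fin m, ℓ θ (z k)) ∂μ) / (1 - lam / 2) +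
                ((∫ θ, Real.log (μ.rnDeriv π θ).toReal ∂μ) +
                    Real.log (2 * Real.sqrt m / ε)) /
                  (m * lam * (1 - lam / 2))} := by
  obtain ⟨hlam0, hlam2⟩ := hlam
  have hE := measurable_uncurry_empiricalRisk (m := m) hℓmeas
  refine (pac_bayes_of_integral_exp_le_one (Measure.pi fun _ : Fin m => D) π
      (((((measurable_risk D hℓmeas).comp measurable_fst).const_mul _).sub hE).const_mul _)
      (integrable_exp_mul_sub_empiricalRisk D hℓmeas hℓbdd hlam0.le m)
      (integral_exp_mul_sub_empiricalRisk_le_one D hℓmeas hℓbdd hlam0.le m) hε).trans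
    (measure_mono fun z hz μ hμ hμπ hllr => ?_)
  have hL : Integrable (risk D ℓ) μ := .of_mem_Icc 0 1 (measurable_risk D hℓmeas).aemeasurable
    (ae_of_all _ (risk_mem_Icc D hℓmeas hℓbdd))
  have hLm : Integrable (empiricalRisk ℓ z) μ := .of_mem_Icc 0 1 hE.of_uncurry_right.aemeasurable
    (ae_of_all _ (empiricalRisk_mem_Icc hℓbdd z))
  have hbound := hz μ hμ hμπ hllr (((hL.const_mul _).sub hLm).const_mul _)
  rw [integral_const_mul, integral_sub (hL.const_mul _) hLm, integral_const_mul] at hbound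
  have hlog : Real.log ε⁻¹ ≤ Real.log (2 * Real.sqrt m / ε) := by
    rw [inv_eq_one_div]
    gcongr
    linarith [Real.one_le_sqrt.2 (Nat.one_le_cast.2 hm : (1 : ℝ) ≤ m)]
  exact le_div_add_div_of_mul_sub_le (by exact_mod_cast hm) hlam0 hlam2
    (hbound.trans (add_le_add_right hlog _))
end

section
/- Let a ≥ 0 and b > 0 be real numbers. Then the function f : (0,2) → ℝ defined by f(λ) = a/(1−λ/2) + b/(λ(1−λ/2)) is quasiconvex on the open interval (0,2); that is, for all λ₁, λ₂ ∈ (0,2) and t ∈ [0,1], f(tλ₁ + (1−t)λ₂) ≤ max(f(λ₁), f(λ₂)). -/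
/-!
The bound is in fact convex on `(0, 2)`: `λ ↦ 1 - λ/2` and `λ ↦ λ(1 - λ/2)` are concave and
positive there, and the reciprocal of a positive concave function is convex because `x ↦ x⁻¹` is
convex and antitone on `(0, ∞)`. A convex function is bounded on a segment by the larger of its
values at the endpoints.
-/

open Set

section
variable {𝕜 E : Type*} [Field 𝕜] [LinearOrder 𝕜] [IsStrictOrderedRing 𝕜] [AddCommMonoid E]
  [Module 𝕜 E]

lemma ConcaveOn.convexOn_inv {s : Set E} {g : E → 𝕜} (hg : ConcaveOn 𝕜 s g)
    (hpos : ∀ x ∈ s, 0 < g x) : ConvexOn 𝕜 s fun x => (g x)⁻¹ := by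
  refine ⟨hg.1, fun x hx y hy a b ha hb hab => ?_⟩
  have hcomb : 0 < a • g x + b • g y := convex_Ioi 0 (hpos x hx) (hpos y hy) ha hb hab
  calc (g (a • x + b • y))⁻¹ ≤ (a • g x + b • g y)⁻¹ := inv_anti₀ hcomb (hg.2 hx hy ha hb hab)
    _ ≤ a • (g x)⁻¹ + b • (g y)⁻¹ := by
      simpa using (convexOn_zpow (-1)).2 (hpos x hx) (hpos y hy) ha hb hab

end

lemma concaveOn_one_sub_half : ConcaveOn ℝ univ fun l : ℝ => 1 - l / 2 :=
  ⟨convex_univ, fun x _ y _ s t _ _ hst => le_of_eq <| by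
    simp only [smul_eq_mul]
    linear_combination hst⟩

lemma concaveOn_mul_one_sub_half : ConcaveOn ℝ univ fun l : ℝ => l * (1 - l / 2) := by
  refine ⟨convex_univ, fun x _ y _ s t hs ht hst => ?_⟩
  obtain rfl : t = 1 - s := by linarith
  simp only [smul_eq_mul]
  nlinarith [mul_nonneg (mul_nonneg hs ht) (sq_nonneg (x - y))]

lemma convexOn_pacBayes_bound {a b : ℝ} (ha : 0 ≤ a) (hb : 0 ≤ b) :
    ConvexOn ℝ (Ioo 0 2) fun l : ℝ => a / (1 - l / 2) + b / (l * (1 - l / 2)) := by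
  have h₁ := (concaveOn_one_sub_half.subset (subset_univ _) (convex_Ioo 0 2)).convexOn_inv
    fun l hl => by linarith [hl.2]
  have h₂ := (concaveOn_mul_one_sub_half.subset (subset_univ _) (convex_Ioo 0 2)).convexOn_inv
    fun l hl => mul_pos hl.1 (by linarith [hl.2])
  simpa only [div_eq_mul_inv, smul_eq_mul, Pi.add_def] using (h₁.smul ha).add (h₂.smul hb)

/-- The function `λ ↦ a/(1 − λ/2) + b/(λ(1 − λ/2))` (the right-hand side of the
PAC-Bayes-λ bound as a function of the trade-off parameter `λ`) is quasiconvex on the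
open interval `(0, 2)`, for any `a ≥ 0` and `b > 0`. -/
theorem pac_bayes_lambda_bound_quasiconvex (a b : ℝ) (ha : 0 ≤ a) (hb : 0 < b) :
    ∀ l₁ ∈ Set.Ioo (0 : ℝ) 2, ∀ l₂ ∈ Set.Ioo (0 : ℝ) 2, ∀ t ∈ Set.Icc (0 : ℝ) 1,
      a / (1 - (t * l₁ + (1 - t) * l₂) / 2) +
          b / ((t * l₁ + (1 - t) * l₂) * (1 - (t * l₁ + (1 - t) * l₂) / 2)) ≤
        max (a / (1 - l₁ / 2) + b / (l₁ * (1 - l₁ / 2)))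
          (a / (1 - l₂ / 2) + b / (l₂ * (1 - l₂ / 2))) := by
  intro l₁ hl₁ l₂ hl₂ t ht
  exact (convexOn_pacBayes_bound ha hb.le).le_max_of_mem_segment hl₁ hl₂
    ⟨t, 1 - t, ht.1, sub_nonneg.2 ht.2, add_sub_cancel t 1, rfl⟩
end
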